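/- Let m, n be positive naturals, r = min(m, n), and let F : ℝ^{m×n} → ℝ be differentiable with L-Lipschitz gradient with respect to the Frobenius norm, i.e. ‖∇F(X) − ∇F(Y)‖_F ≤ L·‖X − Y‖_F for all X, Y. Let η > 0, λ ≥ 0, and let W, M, D be real m×n matrices with ‖D‖_F ≤ √r, ⟨M, D⟩ = ‖M‖_*, and λ·‖W‖_F ≤ 1/2. Define W' = (1 − ηλ)·W − η·D. Then ‖∇F(W)‖_F ≤ 2·(F(W) − F(W'))/η + 4√r·‖∇F(W) − M‖_F + L·η·(√r + 1/2)². -/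

import Mathlib

open Matrix

/-- Frobenius norm of a real matrix: `√ tr(Aᵀ A)`. -/
noncomputable def frobNorm {m n : ℕ} (A : Matrix (Fin m) (Fin n) ℝ) : ℝ :=
  Real.sqrt ((Aᵀ * A).trace)

/-- Nuclear norm of a real matrix: the trace of the positive semidefinite
square root of `MᵀM` (over `ℝ`, `Mᴴ = Mᵀ`). -/
noncomputable def nuclearNorm {m n : ℕ} (M : Matrix (Fin m) (Fin n) ℝ) : ℝ :=
  (((Matrix.posSemidef_conjTranspose_mul_self M).1.eigenvectorUnitary : Matrix (Fin n) (Fin n) ℝ) *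
    diagonal ((Real.sqrt ·) ∘ (Matrix.posSemidef_conjTranspose_mul_self M).1.eigenvalues) *
    (star (Matrix.posSemidef_conjTranspose_mul_self M).1.eigenvectorUnitary :
      Matrix (Fin n) (Fin n) ℝ)).trace

attribute [local instance] Matrix.frobeniusNormedAddCommGroup Matrix.frobeniusNormedSpace

/-- The continuous linear functional `W ↦ ⟨G, W⟩ = tr(Gᵀ·W)` given by the
Frobenius inner product with `G`. -/
noncomputable def frobInnerCLM {m n : ℕ} (G : Matrix (Fin m) (Fin n) ℝ) :
    Matrix (Fin m) (Fin n) ℝ →L[ℝ] ℝ :=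
  LinearMap.toContinuousLinearMap
    { toFun := fun W => (Gᵀ * W).trace
      map_add' := by intro a b; simp [Matrix.mul_add]
      map_smul' := by intro c a; simp [Matrix.mul_smul] }

/-! The descent lemma for the `L`-smooth `F` bounds `F W'` by
`F W - η ⟨∇F(W), λW + D⟩ + (L/2) η² ‖λW + D‖²`, where `‖λW + D‖ ≤ √r + 1/2`. The weight-decay part
of the inner product costs at most `‖∇F(W)‖/2`, and since `⟨M, D⟩ = ‖M‖_* ≥ ‖M‖_F`,
Cauchy–Schwarz gives `⟨∇F(W), D⟩ ≥ ‖∇F(W)‖ - (1 + √r) ‖∇F(W) - M‖`. Rearranging, with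
`1 + √r ≤ 2√r`, gives the bound. -/

open WithLp

theorem nonneg_of_norm_sub_le_mul_norm_sub {E F : Type*} [NormedAddCommGroup E] [Nontrivial E]
    [SeminormedAddCommGroup F] {g : E → F} {L : ℝ}
    (hg : ∀ x y, ‖g x - g y‖ ≤ L * ‖x - y‖) : 0 ≤ L := by
  obtain ⟨x, hx⟩ := exists_ne (0 : E)
  have hx0 := hg x 0
  rw [sub_zero] at hx0
  exact nonneg_of_mul_nonneg_left ((norm_nonneg _).trans hx0) (norm_pos_iff.2 hx)

theorem le_add_fderiv_add_mul_norm_sq {E : Type*} [NormedAddCommGroup E] [NormedSpace ℝ E]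
    {f : E → ℝ} {f' : E → E →L[ℝ] ℝ} {L : ℝ} (hf : ∀ x, HasFDerivAt f (f' x) x)
    (hf' : ∀ x y, ‖f' x - f' y‖ ≤ L * ‖x - y‖) (x y : E) :
    f y ≤ f x + f' x (y - x) + L / 2 * ‖y - x‖ ^ 2 := by
  set v := y - x
  have hpath : ∀ t : ℝ, HasDerivAt (fun s : ℝ => x + s • v) v t := fun t => by
    simpa using ((hasDerivAt_id t).smul_const v).const_add x
  have hderiv : ∀ t : ℝ, HasDerivAt (fun s => f (x + s • v)) (f' (x + t • v) v) t :=
    fun t => (hf _).comp_hasDerivAt t (hpath t)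
  have hbound : ∀ t ∈ Set.Ico (0 : ℝ) 1, f' (x + t • v) v ≤ f' x v + L * t * ‖v‖ ^ 2 := by
    rintro t ⟨ht, -⟩
    calc f' (x + t • v) v = f' x v + (f' (x + t • v) - f' x) v := by simp
      _ ≤ f' x v + ‖f' (x + t • v) - f' x‖ * ‖v‖ := by
        gcongr
        exact (le_abs_self _).trans ((f' (x + t • v) - f' x).le_opNorm v)
      _ ≤ f' x v + L * ‖t • v‖ * ‖v‖ := by
        gcongr
        simpa using hf' (x + t • v) x
      _ = f' x v + L * t * ‖v‖ ^ 2 := by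
        rw [norm_smul, Real.norm_of_nonneg ht]; ring
  have hB : ∀ t : ℝ, HasDerivAt (fun s => f x + s * f' x v + L / 2 * ‖v‖ ^ 2 * s ^ 2)
      (f' x v + L * t * ‖v‖ ^ 2) t := fun t =>
    ((((hasDerivAt_id' t).mul_const (f' x v)).const_add (f x)).add
      ((hasDerivAt_pow 2 t).const_mul (L / 2 * ‖v‖ ^ 2))).congr_deriv (by push_cast; ring)
  have key := image_le_of_deriv_right_le_deriv_boundary
    (fun t _ => (hderiv t).continuousAt.continuousWithinAt)
    (fun t _ => (hderiv t).hasDerivWithinAt) (by simp)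
    (fun t _ => (hB t).continuousAt.continuousWithinAt)
    (fun t _ => (hB t).hasDerivWithinAt) hbound (Set.right_mem_Icc.2 zero_le_one)
  simpa [v] using key

theorem Real.sqrt_sum_le_sum_sqrt {ι : Type*} (s : Finset ι) {f : ι → ℝ}
    (hf : ∀ i ∈ s, 0 ≤ f i) : √(∑ i ∈ s, f i) ≤ ∑ i ∈ s, √(f i) := by
  rw [Real.sqrt_le_left (Finset.sum_nonneg fun i _ => Real.sqrt_nonneg _)]
  calc ∑ i ∈ s, f i = ∑ i ∈ s, √(f i) ^ 2 :=
        Finset.sum_congr rfl fun i hi => (Real.sq_sqrt (hf i hi)).symm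
    _ ≤ (∑ i ∈ s, √(f i)) ^ 2 := Finset.sum_sq_le_sq_sum_of_nonneg fun i _ => Real.sqrt_nonneg _

namespace Matrix

variable {ι κ : Type*} [Fintype ι] [Fintype κ]

theorem frobenius_norm_eq_norm_toLp (A : Matrix ι κ ℝ) :
    ‖A‖ = ‖toLp 2 fun i => toLp 2 (A i)‖ := rfl

theorem trace_transpose_mul_eq_inner (G W : Matrix ι κ ℝ) :
    (Gᵀ * W).trace = inner ℝ (toLp 2 fun i => toLp 2 (G i)) (toLp 2 fun i => toLp 2 (W i)) := by
  simp [trace, mul_apply, PiLp.inner_apply, Finset.sum_comm (γ := ι), mul_comm]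

theorem abs_trace_transpose_mul_le (G W : Matrix ι κ ℝ) : |(Gᵀ * W).trace| ≤ ‖G‖ * ‖W‖ := by
  rw [trace_transpose_mul_eq_inner, frobenius_norm_eq_norm_toLp, frobenius_norm_eq_norm_toLp]
  exact abs_real_inner_le_norm _ _

theorem sqrt_trace_transpose_mul_self (A : Matrix ι κ ℝ) : √((Aᵀ * A).trace) = ‖A‖ := by
  rw [trace_transpose_mul_eq_inner, real_inner_self_eq_norm_sq, Real.sqrt_sq (norm_nonneg _),
    frobenius_norm_eq_norm_toLp]

end Matrix

section Frobenius

variable {m n : ℕ}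

theorem frobNorm_eq_norm (A : Matrix (Fin m) (Fin n) ℝ) : frobNorm A = ‖A‖ :=
  sqrt_trace_transpose_mul_self A

theorem frobInnerCLM_apply (G W : Matrix (Fin m) (Fin n) ℝ) :
    frobInnerCLM G W = (Gᵀ * W).trace := rfl

theorem frobInnerCLM_sub_apply (G H W : Matrix (Fin m) (Fin n) ℝ) :
    frobInnerCLM G W - frobInnerCLM H W = ((G - H)ᵀ * W).trace := by
  rw [frobInnerCLM_apply, frobInnerCLM_apply, transpose_sub, Matrix.sub_mul, trace_sub]

theorem nuclearNorm_eq_sum_sqrt_eigenvalues (M : Matrix (Fin m) (Fin n) ℝ) :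
    nuclearNorm M = ∑ i, √((posSemidef_conjTranspose_mul_self M).1.eigenvalues i) := by
  rw [nuclearNorm, trace_mul_cycle, (posSemidef_conjTranspose_mul_self M).1.eigenvectorUnitary.2.1,
    one_mul, trace_diagonal]
  rfl

theorem norm_le_nuclearNorm (M : Matrix (Fin m) (Fin n) ℝ) : ‖M‖ ≤ nuclearNorm M := by
  have hM := posSemidef_conjTranspose_mul_self M
  rw [← sqrt_trace_transpose_mul_self, nuclearNorm_eq_sum_sqrt_eigenvalues]
  have htrace : (Mᵀ * M).trace = ∑ i, hM.1.eigenvalues i := by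
    simpa using hM.1.trace_eq_sum_eigenvalues
  rw [htrace]
  exact Real.sqrt_sum_le_sum_sqrt _ fun i _ => hM.eigenvalues_nonneg i

theorem norm_sub_mul_le_trace_of_trace_eq_nuclearNorm {G M D : Matrix (Fin m) (Fin n) ℝ} {s : ℝ}
    (hD : ‖D‖ ≤ s) (hMD : (Mᵀ * D).trace = nuclearNorm M) :
    ‖G‖ - (1 + s) * ‖G - M‖ ≤ (Gᵀ * D).trace := by
  have hsplit : (Gᵀ * D).trace = (Mᵀ * D).trace + ((G - M)ᵀ * D).trace := by
    rw [transpose_sub, Matrix.sub_mul, trace_sub]; ring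
  have herr : -(‖G - M‖ * s) ≤ ((G - M)ᵀ * D).trace :=
    (neg_le_neg (mul_le_mul_of_nonneg_left hD (norm_nonneg _))).trans
      ((neg_le_neg (abs_trace_transpose_mul_le _ _)).trans (neg_abs_le _))
  have hM : ‖G‖ - ‖G - M‖ ≤ nuclearNorm M :=
    (sub_le_iff_le_add.2 (norm_le_norm_add_norm_sub' G M)).trans (norm_le_nuclearNorm M)
  linarith

theorem norm_div_two_sub_le_trace_transpose_mul_smul_add {G M W D : Matrix (Fin m) (Fin n) ℝ}
    {lam s : ℝ} (hlam : 0 ≤ lam) (hWlam : lam * ‖W‖ ≤ 1 / 2) (hD : ‖D‖ ≤ s)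
    (hMD : (Mᵀ * D).trace = nuclearNorm M) :
    ‖G‖ / 2 - (1 + s) * ‖G - M‖ ≤ (Gᵀ * (lam • W + D)).trace := by
  have hdecay : -(‖G‖ / 2) ≤ lam * (Gᵀ * W).trace := by
    have := (neg_abs_le _).trans' (neg_le_neg (abs_trace_transpose_mul_le G W))
    nlinarith [norm_nonneg G]
  rw [Matrix.mul_add, trace_add, Matrix.mul_smul, trace_smul, smul_eq_mul]
  linarith [norm_sub_mul_le_trace_of_trace_eq_nuclearNorm (G := G) hD hMD]

theorem le_add_trace_transpose_mul_add_mul_norm_sq {F : Matrix (Fin m) (Fin n) ℝ → ℝ}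
    {gradF : Matrix (Fin m) (Fin n) ℝ → Matrix (Fin m) (Fin n) ℝ} {L : ℝ}
    (hdiff : ∀ X, HasFDerivAt F (frobInnerCLM (gradF X)) X)
    (hLip : ∀ X Y, ‖gradF X - gradF Y‖ ≤ L * ‖X - Y‖) (hL : 0 ≤ L)
    (X Y : Matrix (Fin m) (Fin n) ℝ) :
    F Y ≤ F X + ((gradF X)ᵀ * (Y - X)).trace + L / 2 * ‖Y - X‖ ^ 2 :=
  -- `frobInnerCLM` is typed with the product topology on matrices, `le_add_fderiv_add_mul_norm_sq`
  -- with the Frobenius one; they agree only up to unfolding, hence the `change`.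
  le_add_fderiv_add_mul_norm_sq hdiff (fun X Y =>
    ContinuousLinearMap.opNorm_le_bound _ (mul_nonneg hL (norm_nonneg _)) fun V => by
      change |frobInnerCLM (gradF X) V - frobInnerCLM (gradF Y) V| ≤ _
      rw [frobInnerCLM_sub_apply]
      exact (abs_trace_transpose_mul_le _ _).trans (by gcongr; exact hLip X Y)) X Y

end Frobenius

/-- Per-iteration descent inequality for the orthogonalized (Muon) step:
if `F` is differentiable with Frobenius gradient `gradF` which is `L`-Lipschitz,
`‖D‖_F ≤ √r`, `⟨M, D⟩ = ‖M‖_*`, and `λ·‖W‖_F ≤ 1/2`, then with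
`W' = (1 − ηλ)·W − η·D` we have
`‖∇F(W)‖_F ≤ 2(F(W) − F(W'))/η + 4√r·‖∇F(W) − M‖_F + Lη(√r + 1/2)²`. -/
theorem stmt_10 {m n : ℕ} (hm : 0 < m) (hn : 0 < n) (r : ℕ) (hr : r = min m n)
    (F : Matrix (Fin m) (Fin n) ℝ → ℝ)
    (gradF : Matrix (Fin m) (Fin n) ℝ → Matrix (Fin m) (Fin n) ℝ) (L : ℝ)
    (hdiff : ∀ X, HasFDerivAt F (frobInnerCLM (gradF X)) X)
    (hLip : ∀ X Y, frobNorm (gradF X - gradF Y) ≤ L * frobNorm (X - Y))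
    (η lam : ℝ) (hη : 0 < η) (hlam : 0 ≤ lam)
    (W M D : Matrix (Fin m) (Fin n) ℝ)
    (hD : frobNorm D ≤ Real.sqrt r)
    (hMD : (Mᵀ * D).trace = nuclearNorm M)
    (hWlam : lam * frobNorm W ≤ 1 / 2) :
    frobNorm (gradF W) ≤
      2 * (F W - F ((1 - η * lam) • W - η • D)) / η +
      4 * Real.sqrt r * frobNorm (gradF W - M) +
      L * η * (Real.sqrt r + 1 / 2) ^ 2 := by
  simp only [frobNorm_eq_norm] at hLip hD hWlam ⊢
  have : Nonempty (Fin m) := ⟨⟨0, hm⟩⟩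
  have : Nonempty (Fin n) := ⟨⟨0, hn⟩⟩
  have hL : 0 ≤ L := nonneg_of_norm_sub_le_mul_norm_sub hLip
  have hr1 : 1 ≤ √(r : ℝ) := Real.one_le_sqrt.2 (by norm_cast; omega)
  rw [show (1 - η * lam) • W - η • D = W - η • (lam • W + D) by module]
  have hdesc := le_add_trace_transpose_mul_add_mul_norm_sq hdiff hLip hL W (W - η • (lam • W + D))
  rw [sub_sub_cancel_left, Matrix.mul_neg, trace_neg, Matrix.mul_smul, trace_smul, smul_eq_mul,
    norm_neg, norm_smul, Real.norm_of_nonneg hη.le] at hdesc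
  have hdir : ‖lam • W + D‖ ≤ √(r : ℝ) + 1 / 2 := by
    refine (norm_add_le _ _).trans ?_
    rw [norm_smul, Real.norm_of_nonneg hlam]
    linarith
  have hquad : L / 2 * (η * ‖lam • W + D‖) ^ 2 ≤ L / 2 * (η * (√(r : ℝ) + 1 / 2)) ^ 2 := by
    gcongr
  have hgain := mul_le_mul_of_nonneg_left
    (norm_div_two_sub_le_trace_transpose_mul_smul_add (G := gradF W) hlam hWlam hD hMD) hη.le
  have hcoef := mul_le_mul_of_nonneg_left (mul_le_mul_of_nonneg_right
    (show 1 + √(r : ℝ) ≤ 2 * √(r : ℝ) by linarith) (norm_nonneg (gradF W - M))) hη.le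
  rw [div_add' _ _ _ hη.ne', div_add' _ _ _ hη.ne', le_div_iff₀ hη]
  linarith
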